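/- Let v₁, …, vₙ be vectors in a real inner product space with ⟨vᵢ, vⱼ⟩ ≤ 0 for all i ≠ j. If c₁, …, cₙ are real numbers with ∑ᵢ cᵢ vᵢ = 0, then also ∑ᵢ max(cᵢ, 0) vᵢ = 0 and ∑ᵢ max(−cᵢ, 0) vᵢ = 0. -/
import Mathlib


open scoped RealInnerProductSpace

/-- If vectors have pairwise nonpositive inner products and some linear combination
vanishes, then the positive part and the negative part of the combination both vanish. -/
theorem stmt2 {V : Type*} [NormedAddCommGroup V] [InnerProductSpace ℝ V]
    {n : ℕ} (v : Fin n → V)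
    (hobtuse : ∀ i j, i ≠ j → ⟪v i, v j⟫ ≤ 0)
    (c : Fin n → ℝ) (hc : ∑ i, c i • v i = 0) :
    ∑ i, max (c i) 0 • v i = 0 ∧ ∑ i, max (-c i) 0 • v i = 0 := by
  set p := ∑ i, max (c i) 0 • v i with hp
  set q := ∑ i, max (-c i) 0 • v i with hq
  have hpq : p = q := by
    have : p - q = 0 := by
      rw [hp, hq, ← Finset.sum_sub_distrib, ← hc]
      congr 1
      funext i
      rw [← sub_smul]
      congr 1
      rcases le_total (c i) 0 with h | h
      · rw [max_eq_right h, max_eq_left (by linarith)]; ring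
      · rw [max_eq_left h, max_eq_right (by linarith)]; ring
    exact sub_eq_zero.mp this
  have hinner : ⟪p, q⟫ ≤ 0 := by
    rw [hp, hq, sum_inner]
    apply Finset.sum_nonpos
    intro i _
    rw [inner_sum]
    apply Finset.sum_nonpos
    intro j _
    rw [real_inner_smul_left, real_inner_smul_right]
    rcases eq_or_ne i j with rfl | hij
    · rcases le_total (c i) 0 with h | h
      · rw [max_eq_right h]; simp
      · rw [show max (-c i) 0 = 0 from max_eq_right (by linarith)]; simp
    · have h0 := hobtuse i j hij
      have h1 : 0 ≤ max (c i) 0 := le_max_right _ _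
      have h2 : 0 ≤ max (-c j) 0 := le_max_right _ _
      exact mul_nonpos_of_nonneg_of_nonpos h1 (mul_nonpos_of_nonneg_of_nonpos h2 h0)
  have hp0 : p = 0 := by
    have : ⟪p, p⟫ ≤ 0 := hpq ▸ hinner
    have := real_inner_self_nonneg (x := p)
    have h0 : ⟪p, p⟫ = 0 := le_antisymm ‹⟪p, p⟫ ≤ 0› this
    exact inner_self_eq_zero.mp h0
  exact ⟨hp0, hpq ▸ hp0⟩
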